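/- arXiv:1407.7192 — 2 statements merged into one kernel-verified Lean document; each statement's English description precedes it below -/
import Mathlib

section
/- If $b \le B/10$ and $0 < a < bm$, and $A_0, A_1, \ldots, A_m$ is a $(b,B)$-bounded submartingale (i.e., $A_i - b \le A_{i+1} \le A_i + B$ for all $i$), then $\Pr[A_m \le A_0 - a] \le \exp(-a^2/(3bmB))$. -/
/-!
Chernoff's method for `-(A m - A 0)`. For `t ≥ 0` the function `y ↦ exp (-t y)` is convex, so on
`[-b, B]` it lies below its chord, whose slope is nonpositive and whose value at `0` is
`K = hoeffdingFactor b B t`. Since each increment has nonnegative conditional mean, conditioning on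
`ℱ n` multiplies `E[exp (-t (A (n+1) - A 0))]` by at most `K` compared to `E[exp (-t (A n - A 0))]`,
so `E[exp (-t (A m - A 0))] ≤ K ^ m`. When `b` is small compared to `B`, second order Taylor
bounds give `K ≤ exp (2/3 t² b B)`, and `t = a / (2 m b B)` in Markov's inequality yields the bound.
-/

open MeasureTheory ProbabilityTheory Real

lemma exp_le_one_add_add_sq_of_le_one {t : ℝ} (h0 : 0 ≤ t) (h1 : t ≤ 1) :
    exp t ≤ 1 + t + 3 / 4 * t ^ 2 :=
  calc exp t ≤ _ := exp_bound' h0 h1 (n := 2) two_pos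
    _ = 1 + t + 3 / 4 * t ^ 2 := by simp [Finset.sum_range_succ, Nat.factorial]; ring

lemma exp_neg_le_one_sub_add_sq_of_le_half {t : ℝ} (h0 : 0 ≤ t) (h1 : t ≤ 1 / 2) :
    exp (-t) ≤ 1 - t + 11 / 18 * t ^ 2 := by
  have habs : |-t| ≤ 1 := by rw [abs_neg, abs_of_nonneg h0]; linarith
  have h := exp_bound habs (n := 3) three_pos
  have hsum : ∑ m ∈ Finset.range 3, (-t) ^ m / m.factorial = 1 - t + t ^ 2 / 2 := by
    simp [Finset.sum_range_succ, Nat.factorial]; ring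
  have hcoef : ((Nat.succ 3 : ℕ) : ℝ) / ((Nat.factorial 3 : ℕ) * (3 : ℕ)) = 2 / 9 := by
    norm_num [Nat.factorial]
  rw [hsum, hcoef, abs_neg, abs_of_nonneg h0] at h
  nlinarith [(abs_sub_le_iff.1 h).1, mul_le_mul_of_nonneg_right h1 (sq_nonneg t)]

noncomputable def hoeffdingFactor (b B t : ℝ) : ℝ :=
  (B * exp (t * b) + b * exp (-t * B)) / (b + B)

lemma hoeffdingFactor_nonneg {b B : ℝ} (hb : 0 ≤ b) (hB : 0 ≤ B) (t : ℝ) :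
    0 ≤ hoeffdingFactor b B t := by
  unfold hoeffdingFactor; positivity

lemma exp_neg_mul_le_hoeffdingFactor_add {b B t y : ℝ} (hbB : 0 < b + B) (hyb : -b ≤ y)
    (hyB : y ≤ B) :
    exp (-t * y) ≤ hoeffdingFactor b B t + (exp (-t * B) - exp (t * b)) / (b + B) * y := by
  have hleft : 0 ≤ (B - y) / (b + B) := div_nonneg (by linarith) hbB.le
  have hright : 0 ≤ (y + b) / (b + B) := div_nonneg (by linarith) hbB.le
  have hsum : (B - y) / (b + B) + (y + b) / (b + B) = 1 := by field_simp; ring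
  have hchord := convexOn_exp.2 (Set.mem_univ (t * b)) (Set.mem_univ (-t * B)) hleft hright hsum
  have hpoint : (B - y) / (b + B) * (t * b) + (y + b) / (b + B) * (-t * B) = -t * y := by
    field_simp; ring
  simp only [smul_eq_mul, hpoint] at hchord
  calc exp (-t * y) ≤ (B - y) / (b + B) * exp (t * b) + (y + b) / (b + B) * exp (-t * B) :=
        hchord
    _ = _ := by unfold hoeffdingFactor; field_simp; ring

lemma hoeffdingFactor_le_exp {b B t : ℝ} (hb : 0 ≤ b) (hB : 0 < B) (hbB : 3 * b ≤ 2 * B)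
    (ht : 0 ≤ t) (htB : t * B ≤ 1 / 2) :
    hoeffdingFactor b B t ≤ exp (2 / 3 * t ^ 2 * b * B) := by
  have hpos : 0 < b + B := by linarith
  have hexp_b := exp_le_one_add_add_sq_of_le_one (t := t * b) (by positivity) (by nlinarith)
  have hexp_B := exp_neg_le_one_sub_add_sq_of_le_half (t := t * B) (by positivity) htB
  rw [neg_mul_eq_neg_mul] at hexp_B
  calc hoeffdingFactor b B t
      ≤ (B * (1 + t * b + 3 / 4 * (t * b) ^ 2) + b * (1 - t * B + 11 / 18 * (t * B) ^ 2))
          / (b + B) := by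
        unfold hoeffdingFactor; gcongr
    _ ≤ 1 + 2 / 3 * t ^ 2 * b * B := by
        rw [div_le_iff₀ hpos]; nlinarith [mul_nonneg (mul_nonneg hb hB.le) (sq_nonneg t)]
    _ ≤ exp (2 / 3 * t ^ 2 * b * B) := by linarith [add_one_le_exp (2 / 3 * t ^ 2 * b * B)]

section Submartingale

variable {Ω : Type*} {m0 : MeasurableSpace Ω} {μ : Measure Ω} {ℱ : Filtration ℕ m0}
  {A : ℕ → Ω → ℝ} {b B t : ℝ}

lemma norm_exp_neg_mul_le {c x : ℝ} (ht : 0 ≤ t) (hx : -c ≤ x) : ‖exp (-t * x)‖ ≤ exp (t * c) := by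
  rw [norm_of_nonneg (exp_pos _).le, exp_le_exp]
  nlinarith

lemma stronglyMeasurable_exp_neg_mul_sub (hA : StronglyAdapted ℱ A) {i n : ℕ} (hin : i ≤ n) :
    StronglyMeasurable[ℱ n] fun ω => exp (-t * (A n ω - A i ω)) :=
  continuous_exp.comp_stronglyMeasurable
    (((hA n).sub ((hA i).mono (ℱ.mono hin))).const_mul (-t))

lemma ae_sub_mul_le (hinc : ∀ i, ∀ᵐ ω ∂μ, A i ω - b ≤ A (i + 1) ω) (n : ℕ) :
    ∀ᵐ ω ∂μ, A 0 ω - n * b ≤ A n ω := by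
  induction n with
  | zero => simp
  | succ n ih =>
    filter_upwards [ih, hinc n] with ω hn hstep
    push_cast
    linarith

lemma integrable_exp_neg_mul_sub [IsFiniteMeasure μ] (hA : StronglyAdapted ℱ A) {i n : ℕ}
    (hin : i ≤ n) (ht : 0 ≤ t) {c : ℝ} (hc : ∀ᵐ ω ∂μ, -c ≤ A n ω - A i ω) :
    Integrable (fun ω => exp (-t * (A n ω - A i ω))) μ :=
  Integrable.mono' (integrable_const (exp (t * c)))
    ((stronglyMeasurable_exp_neg_mul_sub hA hin).mono (ℱ.le n)).aestronglyMeasurable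
    (hc.mono fun _ h => norm_exp_neg_mul_le ht h)

lemma condExp_exp_neg_mul_increment_le [IsFiniteMeasure μ] (hsub : Submartingale A ℱ μ)
    (hbB : 0 < b + B) (ht : 0 ≤ t) {n : ℕ}
    (hinc : ∀ᵐ ω ∂μ, A n ω - b ≤ A (n + 1) ω ∧ A (n + 1) ω ≤ A n ω + B) :
    μ[fun ω => exp (-t * (A (n + 1) ω - A n ω))|ℱ n] ≤ᵐ[μ] fun _ => hoeffdingFactor b B t := by
  set β := (exp (-t * B) - exp (t * b)) / (b + B)
  have hβ : β ≤ 0 :=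
    div_nonpos_of_nonpos_of_nonneg (sub_nonpos.2 (exp_le_exp.2 (by nlinarith))) hbB.le
  have hΔ : Integrable (A (n + 1) - A n) μ := (hsub.integrable _).sub (hsub.integrable _)
  have hchord : Integrable ((fun _ => hoeffdingFactor b B t) + β • (A (n + 1) - A n)) μ :=
    (integrable_const _).add (hΔ.smul β)
  have hW := integrable_exp_neg_mul_sub hsub.stronglyAdapted n.le_succ ht (c := b)
    (hinc.mono fun ω h => by linarith [h.1])
  have hle_chord := condExp_mono (m := ℱ n) hW hchord <| by
    filter_upwards [hinc] with ω h
    exact exp_neg_mul_le_hoeffdingFactor_add hbB (by linarith [h.1]) (by linarith [h.2])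
  have hchord_eq : μ[(fun _ => hoeffdingFactor b B t) + β • (A (n + 1) - A n)|ℱ n]
      =ᵐ[μ] (fun _ => hoeffdingFactor b B t) + β • μ[A (n + 1) - A n|ℱ n] :=
    (condExp_add (integrable_const _) (hΔ.smul β) _).trans <| by
      filter_upwards [condExp_smul (μ := μ) (m := ℱ n) β (A (n + 1) - A n)] with ω hω
      simp only [Pi.add_apply, condExp_const (ℱ.le n), hω]
  filter_upwards [hle_chord, hchord_eq, hsub.condExp_sub_nonneg n.le_succ] with ω hle heq hmean
  rw [heq] at hle
  simp only [Pi.add_apply, Pi.smul_apply, smul_eq_mul] at hle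
  nlinarith [mul_nonpos_of_nonpos_of_nonneg hβ hmean]

lemma integral_exp_neg_mul_sub_le_pow [IsProbabilityMeasure μ] (hsub : Submartingale A ℱ μ)
    (hb : 0 ≤ b) (hB : 0 < B) (ht : 0 ≤ t)
    (hinc : ∀ i, ∀ᵐ ω ∂μ, A i ω - b ≤ A (i + 1) ω ∧ A (i + 1) ω ≤ A i ω + B) (n : ℕ) :
    ∫ ω, exp (-t * (A n ω - A 0 ω)) ∂μ ≤ hoeffdingFactor b B t ^ n := by
  induction n with
  | zero => simp
  | succ n ih =>
    set Z := fun ω => exp (-t * (A n ω - A 0 ω))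
    set W := fun ω => exp (-t * (A (n + 1) ω - A n ω))
    have hZW : (fun ω => exp (-t * (A (n + 1) ω - A 0 ω))) = Z * W := by
      funext ω; simp only [Z, W, Pi.mul_apply, ← exp_add]; ring_nf
    have hlow := ae_sub_mul_le (fun i => (hinc i).mono fun _ h => h.1) n
    have hZint := integrable_exp_neg_mul_sub hsub.stronglyAdapted n.zero_le ht (c := n * b)
      (hlow.mono fun ω h => by linarith)
    have hWint := integrable_exp_neg_mul_sub hsub.stronglyAdapted n.le_succ ht (c := b)
      ((hinc n).mono fun ω h => by linarith [h.1])
    have hpull := condExp_stronglyMeasurable_mul_of_bound (ℱ.le n)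
      (stronglyMeasurable_exp_neg_mul_sub hsub.stronglyAdapted n.zero_le) hWint _
      (hlow.mono fun ω h => norm_exp_neg_mul_le (c := n * b) ht (by linarith))
    calc ∫ ω, exp (-t * (A (n + 1) ω - A 0 ω)) ∂μ
        = ∫ ω, μ[Z * W|ℱ n] ω ∂μ := by rw [hZW, integral_condExp (ℱ.le n)]
      _ = ∫ ω, (Z * μ[W|ℱ n]) ω ∂μ := integral_congr_ae hpull
      _ ≤ ∫ ω, Z ω * hoeffdingFactor b B t ∂μ := by
        refine integral_mono_ae (integrable_condExp.congr hpull) (hZint.mul_const _) ?_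
        filter_upwards [condExp_exp_neg_mul_increment_le hsub (by linarith) ht (hinc n)] with ω hω
        exact mul_le_mul_of_nonneg_left hω (exp_pos _).le
      _ = (∫ ω, Z ω ∂μ) * hoeffdingFactor b B t := integral_mul_const _ _
      _ ≤ hoeffdingFactor b B t ^ (n + 1) := by
        rw [pow_succ]; exact mul_le_mul_of_nonneg_right ih (hoeffdingFactor_nonneg hb hB.le t)

lemma measure_le_sub_le_exp_mul_pow [IsProbabilityMeasure μ] (hsub : Submartingale A ℱ μ)
    (hb : 0 ≤ b) (hB : 0 < B) (ht : 0 ≤ t)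
    (hinc : ∀ i, ∀ᵐ ω ∂μ, A i ω - b ≤ A (i + 1) ω ∧ A (i + 1) ω ≤ A i ω + B) (m : ℕ) (a : ℝ) :
    μ {ω | A m ω ≤ A 0 ω - a} ≤ ENNReal.ofReal (exp (-t * a) * hoeffdingFactor b B t ^ m) := by
  have hint := integrable_exp_neg_mul_sub hsub.stronglyAdapted m.zero_le ht (c := m * b)
    ((ae_sub_mul_le (fun i => (hinc i).mono fun _ h => h.1) m).mono fun ω h => by linarith)
  have hset : {ω | A m ω ≤ A 0 ω - a} = {ω | A m ω - A 0 ω ≤ -a} := by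
    ext ω; change A m ω ≤ _ ↔ A m ω - _ ≤ _; constructor <;> intro h <;> linarith
  rw [← ENNReal.ofReal_toReal (measure_ne_top μ _), hset]
  refine ENNReal.ofReal_le_ofReal ?_
  calc μ.real {ω | A m ω - A 0 ω ≤ -a}
      ≤ exp (- -t * -a) * mgf (fun ω => A m ω - A 0 ω) μ (-t) :=
        measure_le_le_exp_mul_mgf (-a) (neg_nonpos.2 ht) hint
    _ ≤ exp (-t * a) * hoeffdingFactor b B t ^ m := by
      rw [neg_mul_neg]
      exact mul_le_mul_of_nonneg_left
        (integral_exp_neg_mul_sub_le_pow hsub hb hB ht hinc m) (exp_pos _).le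

end Submartingale

/-- Azuma-type bound for (b,B)-bounded submartingales. -/
theorem submartingale_lower_deviation_bound
    {Ω : Type*} {m0 : MeasurableSpace Ω} {μ : Measure Ω} [IsProbabilityMeasure μ]
    (ℱ : Filtration ℕ m0) (A : ℕ → Ω → ℝ) (b B : ℝ) (m : ℕ) (a : ℝ)
    (hb : 0 < b) (hB : 0 < B) (hbB : b ≤ B / 10) (ha : 0 < a) (ham : a < b * m)
    (hsub : Submartingale A ℱ μ)
    (hbdd : ∀ i : ℕ, ∀ᵐ ω ∂μ, A i ω - b ≤ A (i + 1) ω ∧ A (i + 1) ω ≤ A i ω + B) :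
    μ {ω | A m ω ≤ A 0 ω - a} ≤ ENNReal.ofReal (Real.exp (-a ^ 2 / (3 * b * m * B))) := by
  have hm : (0 : ℝ) < m := pos_of_mul_pos_right (ha.trans ham) hb.le
  set t := a / (2 * m * b * B) with ht_def
  have ht : 0 ≤ t := by positivity
  have htB : t * B ≤ 1 / 2 := by
    rw [ht_def, div_mul_eq_mul_div, div_le_iff₀ (by positivity)]; nlinarith
  calc μ {ω | A m ω ≤ A 0 ω - a}
      ≤ ENNReal.ofReal (exp (-t * a) * hoeffdingFactor b B t ^ m) :=
        measure_le_sub_le_exp_mul_pow hsub hb.le hB ht hbdd m a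
    _ ≤ ENNReal.ofReal (exp (-t * a) * exp (2 / 3 * t ^ 2 * b * B) ^ m) := by
        gcongr
        · exact hoeffdingFactor_nonneg hb.le hB.le t
        · exact hoeffdingFactor_le_exp hb.le hB (by linarith) ht htB
    _ = ENNReal.ofReal (exp (-a ^ 2 / (3 * b * m * B))) := by
        rw [← exp_nat_mul, ← exp_add, ht_def]; congr 2; field_simp; ring
end

section
/- If $b \le B/10$ and $0 < a < bm$, and $A_0, A_1, \ldots, A_m$ is a $(b,B)$-bounded supermartingale, then $\Pr[A_m \ge A_0 + a] \le \exp(-a^2/(3bmB))$. -/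
/-!
Hoeffding's convexity argument, made asymmetric: an increment `x ∈ [-b, B]` satisfies
`exp (t x) ≤ L(t) + c(t) x` with `c(t) ≥ 0`, where `L(t)` is the moment generating function of the
mean-zero law on `{-b, B}`. The supermartingale property kills the linear term in expectation, so
`E[exp (t (A m - A 0))] ≤ L(t)^m ≤ exp (2/3 · b (B + b) m t²)` for `t (B + b) ≤ 3/4`, where the
variance `bB` rather than the range `(b + B)²` appears. Chernoff's bound with
`t = 3a / (4 m b (B + b))` gives `exp (-3a² / (8 m b (B + b)))`, and `B ≥ 8b` turns this into the
claimed exponent.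
-/

open MeasureTheory ProbabilityTheory Real

section TwoPoint

variable {b B t : ℝ}

/-- The moment generating function of the mean-zero law on `{-b, B}`. -/
noncomputable def twoPointMGF (b B t : ℝ) : ℝ :=
  (B * exp (-(t * b)) + b * exp (t * B)) / (B + b)

lemma exp_le_one_add_add_two_thirds_sq {u : ℝ} (h0 : 0 ≤ u) (h1 : u ≤ 3 / 4) :
    exp u ≤ 1 + u + 2 / 3 * u ^ 2 := by
  have h := exp_bound' h0 (by linarith) (n := 3) (by norm_num)
  simp only [Finset.sum_range_succ, Finset.sum_range_zero, Nat.factorial] at h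
  norm_num at h
  nlinarith [pow_nonneg h0 2, pow_nonneg h0 3]

lemma exp_mul_le_twoPointMGF_add {x : ℝ} (hbB : 0 < B + b) (hxb : -b ≤ x) (hxB : x ≤ B) :
    exp (t * x) ≤ twoPointMGF b B t + x * ((exp (t * B) - exp (-(t * b))) / (B + b)) := by
  have hx : t * x = (B - x) / (B + b) * (-(t * b)) + (x + b) / (B + b) * (t * B) := by
    field_simp; ring
  have hconv := convexOn_exp.2 (Set.mem_univ (-(t * b))) (Set.mem_univ (t * B))
    (div_nonneg (by linarith) hbB.le) (div_nonneg (by linarith) hbB.le)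
    (by field_simp; ring : (B - x) / (B + b) + (x + b) / (B + b) = 1)
  rw [hx]
  refine hconv.trans_eq ?_
  simp only [smul_eq_mul, twoPointMGF]
  field_simp
  ring

lemma twoPointMGF_nonneg (hb : 0 ≤ b) (hB : 0 ≤ B) : 0 ≤ twoPointMGF b B t := by
  unfold twoPointMGF; positivity

lemma twoPointMGF_le_exp (hb : 0 ≤ b) (hbB : 0 < B + b) (ht : 0 ≤ t)
    (htu : t * (B + b) ≤ 3 / 4) :
    twoPointMGF b B t ≤ exp (2 / 3 * b * (B + b) * t ^ 2) := by
  set u := t * (B + b) with hu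
  have hexp : exp (t * B) = exp (-(t * b)) * exp u := by
    rw [← exp_add, hu]; ring_nf
  have hrepr : twoPointMGF b B t = exp (-(t * b)) * (1 + b * (exp u - 1) / (B + b)) := by
    rw [twoPointMGF, hexp]; field_simp; ring
  have hquad : b * (exp u - 1) / (B + b) ≤ t * b + 2 / 3 * b * (B + b) * t ^ 2 := by
    have hu' : exp u - 1 ≤ u + 2 / 3 * u ^ 2 := by
      linarith [exp_le_one_add_add_two_thirds_sq (mul_nonneg ht hbB.le) htu]
    calc b * (exp u - 1) / (B + b) ≤ b * (u + 2 / 3 * u ^ 2) / (B + b) := by gcongr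
      _ = t * b + 2 / 3 * b * (B + b) * t ^ 2 := by rw [hu]; field_simp
  calc twoPointMGF b B t = exp (-(t * b)) * (1 + b * (exp u - 1) / (B + b)) := hrepr
    _ ≤ exp (-(t * b)) * exp (b * (exp u - 1) / (B + b)) := by
      gcongr; linarith [add_one_le_exp (b * (exp u - 1) / (B + b))]
    _ = exp (-(t * b) + b * (exp u - 1) / (B + b)) := (exp_add _ _).symm
    _ ≤ exp (2 / 3 * b * (B + b) * t ^ 2) := exp_le_exp.2 (by linarith)

end TwoPoint

namespace MeasureTheory

variable {Ω : Type*} {m0 : MeasurableSpace Ω} {μ : Measure Ω} {ℱ : Filtration ℕ m0}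
  {A : ℕ → Ω → ℝ} {b B t : ℝ}

/-- `(b, B)`-boundedness of a process. -/
def HasBoundedIncrements (μ : Measure Ω) (b B : ℝ) (A : ℕ → Ω → ℝ) : Prop :=
  ∀ i, ∀ᵐ ω ∂μ, A i ω - b ≤ A (i + 1) ω ∧ A (i + 1) ω ≤ A i ω + B

lemma HasBoundedIncrements.sub_zero_le (hA : HasBoundedIncrements μ b B A) (n : ℕ) :
    ∀ᵐ ω ∂μ, A n ω - A 0 ω ≤ n * B := by
  induction n with
  | zero => simp
  | succ n ih =>
    filter_upwards [ih, hA n] with ω hn hstep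
    push_cast
    linarith [hstep.2]

lemma HasBoundedIncrements.norm_exp_mul_sub_le (hA : HasBoundedIncrements μ b B A)
    (ht : 0 ≤ t) (n : ℕ) : ∀ᵐ ω ∂μ, ‖exp (t * (A n ω - A 0 ω))‖ ≤ exp (t * (n * B)) := by
  filter_upwards [hA.sub_zero_le n] with ω hω
  rw [norm_of_nonneg (exp_pos _).le]
  exact exp_le_exp.2 (mul_le_mul_of_nonneg_left hω ht)

lemma HasBoundedIncrements.integrable_exp_mul_sub [IsFiniteMeasure μ]
    (hA : HasBoundedIncrements μ b B A) (hmeas : ∀ n, AEStronglyMeasurable (A n) μ)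
    (ht : 0 ≤ t) (n : ℕ) : Integrable (fun ω => exp (t * (A n ω - A 0 ω))) μ :=
  (integrable_const _).mono'
    (continuous_exp.comp_aestronglyMeasurable (((hmeas n).sub (hmeas 0)).const_mul t))
    (hA.norm_exp_mul_sub_le ht n)

theorem Supermartingale.integral_mul_sub_nonpos [IsFiniteMeasure μ]
    (hA : Supermartingale A ℱ μ) {i j : ℕ} (hij : i ≤ j) {g : Ω → ℝ}
    (hg : StronglyMeasurable[ℱ i] g) (hg0 : 0 ≤ᵐ[μ] g)
    (hgA : Integrable (g * (A j - A i)) μ) :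
    ∫ ω, g ω * (A j ω - A i ω) ∂μ ≤ 0 := by
  have hdiff := (hA.integrable j).sub (hA.integrable i)
  have hcond : μ[A j - A i | ℱ i] ≤ᵐ[μ] 0 := by
    filter_upwards [condExp_sub (hA.integrable j) (hA.integrable i) (ℱ i),
      hA.condExp_ae_le hij] with ω hsub hle
    rw [hsub, Pi.sub_apply, condExp_of_stronglyMeasurable (ℱ.le i) (hA.stronglyMeasurable i)
      (hA.integrable i)]
    exact sub_nonpos.2 hle
  calc ∫ ω, g ω * (A j ω - A i ω) ∂μ = ∫ ω, (μ[g * (A j - A i) | ℱ i]) ω ∂μ :=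
        (integral_condExp (ℱ.le i)).symm
    _ = ∫ ω, g ω * (μ[A j - A i | ℱ i]) ω ∂μ :=
        integral_congr_ae (condExp_mul_of_stronglyMeasurable_left hg hgA hdiff)
    _ ≤ 0 := integral_nonpos_of_ae <| by
        filter_upwards [hg0, hcond] with ω hgω hω using mul_nonpos_of_nonneg_of_nonpos hgω hω

theorem Supermartingale.mgf_sub_le_pow [IsProbabilityMeasure μ] (hsup : Supermartingale A ℱ μ)
    (hA : HasBoundedIncrements μ b B A) (hb : 0 < b) (hB : 0 < B) (ht : 0 ≤ t) (n : ℕ) :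
    mgf (fun ω => A n ω - A 0 ω) μ t ≤ twoPointMGF b B t ^ n := by
  set f : ℕ → Ω → ℝ := fun n ω => exp (t * (A n ω - A 0 ω))
  set c := (exp (t * B) - exp (-(t * b))) / (B + b)
  have hc : 0 ≤ c := div_nonneg (sub_nonneg.2 (exp_le_exp.2 (by nlinarith))) (by positivity)
  have hf := hA.integrable_exp_mul_sub (fun n => (hsup.integrable n).1) ht
  induction n with
  | zero => simp [mgf]
  | succ n ih =>
    have hfn : StronglyMeasurable[ℱ n] (f n) := continuous_exp.comp_stronglyMeasurable
      (((hsup.stronglyMeasurable n).sub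
        ((hsup.stronglyMeasurable 0).mono (ℱ.mono n.zero_le))).const_mul t)
    have hfY : Integrable (fun ω => f n ω * (A (n + 1) ω - A n ω)) μ :=
      ((hsup.integrable (n + 1)).sub (hsup.integrable n)).bdd_mul (hf n).1
        (hA.norm_exp_mul_sub_le ht n)
    have hstep : ∀ᵐ ω ∂μ, f (n + 1) ω ≤ twoPointMGF b B t * f n ω
        + c * (f n ω * (A (n + 1) ω - A n ω)) := by
      filter_upwards [hA n] with ω hω
      have hsplit : f (n + 1) ω = f n ω * exp (t * (A (n + 1) ω - A n ω)) := by
        simp only [f, ← exp_add]; ring_nf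
      have hchord := exp_mul_le_twoPointMGF_add (b := b) (B := B) (t := t) (by linarith)
        (by linarith [hω.1] : -b ≤ A (n + 1) ω - A n ω) (by linarith [hω.2])
      rw [hsplit]
      nlinarith [mul_le_mul_of_nonneg_left hchord (exp_pos (t * (A n ω - A 0 ω))).le]
    calc mgf (fun ω => A (n + 1) ω - A 0 ω) μ t = ∫ ω, f (n + 1) ω ∂μ := rfl
      _ ≤ ∫ ω, (twoPointMGF b B t * f n ω + c * (f n ω * (A (n + 1) ω - A n ω))) ∂μ :=
        integral_mono_ae (hf (n + 1)) (((hf n).const_mul _).add (hfY.const_mul c)) hstep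
      _ = twoPointMGF b B t * mgf (fun ω => A n ω - A 0 ω) μ t
          + c * ∫ ω, f n ω * (A (n + 1) ω - A n ω) ∂μ := by
        rw [integral_add ((hf n).const_mul _) (hfY.const_mul c), integral_const_mul,
          integral_const_mul]; rfl
      _ ≤ twoPointMGF b B t * twoPointMGF b B t ^ n + c * 0 := by
        gcongr
        · exact twoPointMGF_nonneg hb.le hB.le
        · exact hsup.integral_mul_sub_nonpos n.le_succ hfn
            (ae_of_all _ fun ω => (exp_pos _).le) hfY
      _ = twoPointMGF b B t ^ (n + 1) := by ring

theorem Supermartingale.measureReal_ge_le_exp [IsProbabilityMeasure μ]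
    (hsup : Supermartingale A ℱ μ) (hA : HasBoundedIncrements μ b B A) (hb : 0 < b)
    (hB : 0 < B) (ht : 0 ≤ t) (htu : t * (B + b) ≤ 3 / 4) (m : ℕ) (a : ℝ) :
    μ.real {ω | A m ω ≥ A 0 ω + a} ≤ exp (m * (2 / 3 * b * (B + b) * t ^ 2) - t * a) := by
  have hset : {ω | A m ω ≥ A 0 ω + a} = {ω | a ≤ A m ω - A 0 ω} := by
    ext ω; simp [le_sub_iff_add_le']
  have hint := hA.integrable_exp_mul_sub (fun n => (hsup.integrable n).1) ht m
  calc μ.real {ω | A m ω ≥ A 0 ω + a}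
      ≤ exp (-t * a) * mgf (fun ω => A m ω - A 0 ω) μ t :=
        hset ▸ measure_ge_le_exp_mul_mgf a ht hint
    _ ≤ exp (-t * a) * twoPointMGF b B t ^ m := by
        gcongr; exact hsup.mgf_sub_le_pow hA hb hB ht m
    _ ≤ exp (-t * a) * exp (2 / 3 * b * (B + b) * t ^ 2) ^ m := by
        gcongr
        · exact twoPointMGF_nonneg hb.le hB.le
        · exact twoPointMGF_le_exp hb.le (by linarith) ht htu
    _ = exp (m * (2 / 3 * b * (B + b) * t ^ 2) - t * a) := by
        rw [← exp_nat_mul, ← exp_add]; ring_nf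

theorem Supermartingale.measure_ge_le_exp [IsProbabilityMeasure μ]
    (hsup : Supermartingale A ℱ μ) (hA : HasBoundedIncrements μ b B A) (hb : 0 < b)
    (hB : 0 < B) {m : ℕ} {a : ℝ} (ha : 0 < a) (ham : a ≤ b * m) :
    μ {ω | A m ω ≥ A 0 ω + a} ≤ ENNReal.ofReal (exp (-(3 * a ^ 2) / (8 * m * b * (B + b)))) := by
  have hm : 0 < (m : ℝ) := pos_of_mul_pos_right (ha.trans_le ham) hb.le
  -- the minimiser of the exponent `m · 2/3 · b (B + b) t² - t a`
  set t := 3 * a / (4 * m * b * (B + b))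
  have htu : t * (B + b) ≤ 3 / 4 := by
    rw [div_mul_eq_mul_div, div_le_iff₀ (by positivity)]; nlinarith
  rw [← ofReal_measureReal]
  gcongr
  refine (hsup.measureReal_ge_le_exp hA hb hB (by positivity) htu m a).trans_eq ?_
  congr 1
  simp only [t]
  field_simp
  ring

end MeasureTheory

/-- Azuma-type bound for (b,B)-bounded supermartingales. -/
theorem supermartingale_upper_deviation_bound
    {Ω : Type*} {m0 : MeasurableSpace Ω} {μ : Measure Ω} [IsProbabilityMeasure μ]
    (ℱ : Filtration ℕ m0) (A : ℕ → Ω → ℝ) (b B : ℝ) (m : ℕ) (a : ℝ)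
    (hb : 0 < b) (hB : 0 < B) (hbB : b ≤ B / 10) (ha : 0 < a) (ham : a < b * m)
    (hsup : Supermartingale A ℱ μ)
    (hbdd : ∀ i : ℕ, ∀ᵐ ω ∂μ, A i ω - b ≤ A (i + 1) ω ∧ A (i + 1) ω ≤ A i ω + B) :
    μ {ω | A m ω ≥ A 0 ω + a} ≤ ENNReal.ofReal (Real.exp (-a ^ 2 / (3 * b * m * B))) := by
  have hm : 0 < (m : ℝ) := pos_of_mul_pos_right (ha.trans ham) hb.le
  refine (hsup.measure_ge_le_exp hbdd hb hB ha ham.le).trans ?_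
  refine ENNReal.ofReal_le_ofReal (exp_le_exp.2 ?_)
  rw [neg_div, neg_div, neg_le_neg_iff, div_le_div_iff₀ (by positivity) (by positivity)]
  nlinarith [mul_nonneg (mul_nonneg (mul_nonneg (sq_nonneg a) hm.le) hb.le)
    (by linarith : (0 : ℝ) ≤ B - 8 * b)]
end
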